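/- The shift quasi-order of the free monoid on countably many generators acting on 2^{M_ω} Borel reduces to the shift quasi-order of the free monoid on two generators acting on 2^{M_2}: the map p ↦ p* defined by p*(h) = p(h) if L(h) = 0, p*(h) = 1 if L(h) = 1, and p*(h) = 0 if L(h) > 1, is a Borel reduction. -/

import Mathlib

open Classical

/-- The submonoid of `M₂` (`FreeMonoid Bool`, `a = false`, `b = true`) that is the image
of the free monoid `M_ω` on generators `x_n` under `x_n ↦ a b^n` (`n ≥ 1`). -/
def Momega : Submonoid (FreeMonoid Bool) :=
  Submonoid.closure
    {w | ∃ n : ℕ, 1 ≤ n ∧ w = FreeMonoid.ofList (false :: List.replicate n true)}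

/-- `L h` is the length of `h'` in the canonical factorization `h = h' * g`, where `g` is
the longest suffix of `h` lying in `M_ω`. -/
noncomputable def Llen (h : FreeMonoid Bool) : ℕ :=
  sInf {n : ℕ | FreeMonoid.ofList (h.toList.drop n) ∈ Momega}

/-- The map `p ↦ p*`, where `p*(h) = p(h)` if `L(h) = 0` (i.e. `h ∈ M_ω`),
`p*(h) = 1` if `L(h) = 1`, and `p*(h) = 0` if `L(h) > 1`. -/
noncomputable def pStar (p : Momega → Bool) (h : FreeMonoid Bool) : Bool :=
  if hm : h ∈ Momega then p ⟨h, hm⟩ else (if Llen h = 1 then true else false)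


/-!
`M_ω` is right unitary in `M₂`: for `m ∈ M_ω`, `h * m ∈ M_ω ↔ h ∈ M_ω`, and then
`L (h * m) = L h`. So a shift `p = m · q` with `m ∈ M_ω` is transported verbatim to
`p* = m · q*`. Conversely, if `p* = m · q*` for some `m ∈ M₂`, evaluating at `b` gives
`1 = p* b = q* (b m)`; since `b m ∉ M_ω` this says `L (b m) = 1`, i.e. `m ∈ M_ω`, and restricting
to `M_ω` gives `p = m · q`.
-/

/-- The words of `M₂` lying in `M_ω`, as lists: concatenations of blocks `a b^n`, `n ≥ 1`. -/
inductive IsXWord : List Bool → Prop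
  | nil : IsXWord []
  | cons (n : ℕ) (hn : 1 ≤ n) {w : List Bool} : IsXWord w →
      IsXWord (false :: List.replicate n true ++ w)

namespace IsXWord

theorem not_cons_true {l : List Bool} : ¬ IsXWord (true :: l) := by
  rintro ⟨⟩

theorem append {u v : List Bool} (hu : IsXWord u) (hv : IsXWord v) : IsXWord (u ++ v) := by
  induction hu with
  | nil => exact hv
  | cons n hn _ ih => simpa using cons n hn ih

theorem of_append_right {h m : List Bool} (hm : IsXWord m) (hhm : IsXWord (h ++ m)) :
    IsXWord h := by
  generalize hl : h ++ m = l at hhm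
  induction hhm generalizing h with
  | nil => simp_all [nil]
  | @cons n hn w _ ih =>
    obtain _ | ⟨x, t⟩ := h
    · exact nil
    obtain ⟨rfl, htm⟩ : x = false ∧ t ++ m = List.replicate n true ++ w := by simpa using hl
    obtain ⟨a, hrep, rfl⟩ | ⟨c, rfl, hw⟩ := List.append_eq_append_iff.mp htm
    · -- `m` would start with a `b` unless the block `a b^n` ends exactly where `t` does
      obtain _ | ⟨y, a⟩ := a
      · rw [List.append_nil] at hrep
        simpa [← hrep] using cons n hn nil
      · have hy : y = true :=
          List.eq_of_mem_replicate (show y ∈ List.replicate n true by simp [hrep])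
        exact absurd (hy ▸ hm) not_cons_true
    · simpa using cons n hn (ih hw.symm)

theorem ofList_mem_Momega {l : List Bool} (hl : IsXWord l) :
    FreeMonoid.ofList l ∈ Momega := by
  induction hl with
  | nil => exact Momega.one_mem
  | @cons n hn w _ ih =>
    rw [FreeMonoid.ofList_append]
    exact Momega.mul_mem (Submonoid.subset_closure ⟨n, hn, rfl⟩) ih

end IsXWord

theorem mem_Momega_iff {h : FreeMonoid Bool} : h ∈ Momega ↔ IsXWord h.toList := by
  refine ⟨fun hh => ?_, fun hh => by simpa using hh.ofList_mem_Momega⟩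
  induction hh using Submonoid.closure_induction with
  | mem x hx =>
    obtain ⟨n, hn, rfl⟩ := hx
    simpa using IsXWord.cons n hn IsXWord.nil
  | one => exact IsXWord.nil
  | mul x y _ _ hx hy => simpa using hx.append hy

theorem mul_mem_Momega_iff {h m : FreeMonoid Bool} (hm : m ∈ Momega) :
    h * m ∈ Momega ↔ h ∈ Momega := by
  rw [mem_Momega_iff] at hm
  simp only [mem_Momega_iff, FreeMonoid.toList_mul]
  exact ⟨IsXWord.of_append_right hm, (IsXWord.append · hm)⟩

theorem of_true_mul_notMem_Momega (m : FreeMonoid Bool) : FreeMonoid.of true * m ∉ Momega := by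
  rw [mem_Momega_iff]
  exact IsXWord.not_cons_true

theorem Llen_le {h : FreeMonoid Bool} {n : ℕ}
    (hn : FreeMonoid.ofList (h.toList.drop n) ∈ Momega) : Llen h ≤ n :=
  Nat.sInf_le hn

theorem ofList_drop_length_mem (h : FreeMonoid Bool) :
    FreeMonoid.ofList (h.toList.drop h.toList.length) ∈ Momega := by
  simp [Momega.one_mem]

theorem Llen_le_length (h : FreeMonoid Bool) : Llen h ≤ h.toList.length :=
  Llen_le (ofList_drop_length_mem h)

theorem ofList_drop_Llen_mem (h : FreeMonoid Bool) :
    FreeMonoid.ofList (h.toList.drop (Llen h)) ∈ Momega :=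
  Nat.sInf_mem (s := {n | FreeMonoid.ofList (h.toList.drop n) ∈ Momega})
    ⟨_, ofList_drop_length_mem h⟩

theorem Llen_mul {h m : FreeMonoid Bool} (hm : m ∈ Momega) : Llen (h * m) = Llen h := by
  have drop_mul : ∀ n ≤ h.toList.length, FreeMonoid.ofList ((h * m).toList.drop n) =
      FreeMonoid.ofList (h.toList.drop n) * m := fun n hn => by
    rw [FreeMonoid.toList_mul, List.drop_append_of_le_length hn, FreeMonoid.ofList_append,
      FreeMonoid.ofList_toList]
  have le : Llen (h * m) ≤ Llen h := Llen_le <| by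
    rw [drop_mul _ (Llen_le_length h)]
    exact Momega.mul_mem (ofList_drop_Llen_mem h) hm
  refine le_antisymm le (Llen_le ?_)
  rw [← mul_mem_Momega_iff hm, ← drop_mul _ (le.trans (Llen_le_length h))]
  exact ofList_drop_Llen_mem (h * m)

theorem Llen_of_true_mul_eq_one_iff {m : FreeMonoid Bool} :
    Llen (FreeMonoid.of true * m) = 1 ↔ m ∈ Momega := by
  have drop_one : FreeMonoid.ofList ((FreeMonoid.of true * m).toList.drop 1) = m := by
    simp
  refine ⟨fun h1 => ?_, fun hm => le_antisymm (Llen_le (drop_one ▸ hm)) ?_⟩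
  · simpa [h1, drop_one] using ofList_drop_Llen_mem (FreeMonoid.of true * m)
  · rw [Nat.one_le_iff_ne_zero]
    intro h0
    have := ofList_drop_Llen_mem (FreeMonoid.of true * m)
    rw [h0, List.drop_zero, FreeMonoid.ofList_toList] at this
    exact of_true_mul_notMem_Momega m this

section pStar

variable {p q : Momega → Bool} {h m : FreeMonoid Bool}

theorem pStar_of_mem (hh : h ∈ Momega) : pStar p h = p ⟨h, hh⟩ :=
  dif_pos hh

theorem pStar_of_notMem (hh : h ∉ Momega) : pStar p h = decide (Llen h = 1) := by
  simp [pStar, hh]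

theorem pStar_of_true : pStar p (FreeMonoid.of true) = true := by
  have hL : Llen (FreeMonoid.of true) = 1 := by
    simpa using Llen_of_true_mul_eq_one_iff.mpr Momega.one_mem
  rw [pStar_of_notMem (by simpa using of_true_mul_notMem_Momega 1), hL]
  rfl

theorem measurable_pStar : Measurable (fun p : Momega → Bool => pStar p) := by
  refine measurable_pi_lambda _ fun h => ?_
  by_cases hh : h ∈ Momega
  · simpa only [pStar_of_mem hh] using measurable_pi_apply _
  · simpa only [pStar_of_notMem hh] using measurable_const

theorem pStar_mul_of_shift (m : Momega) (hpq : ∀ s : Momega, p s = q (s * m))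
    (h : FreeMonoid Bool) : pStar p h = pStar q (h * m) := by
  by_cases hh : h ∈ Momega
  · rw [pStar_of_mem hh, pStar_of_mem (Momega.mul_mem hh m.2)]
    exact hpq ⟨h, hh⟩
  · rw [pStar_of_notMem hh, pStar_of_notMem (by rwa [mul_mem_Momega_iff m.2]),
      Llen_mul m.2]

theorem mem_Momega_of_pStar_mul (hpq : ∀ h, pStar p h = pStar q (h * m)) : m ∈ Momega := by
  have h1 := hpq (FreeMonoid.of true)
  rw [pStar_of_true, pStar_of_notMem (of_true_mul_notMem_Momega m)] at h1
  exact Llen_of_true_mul_eq_one_iff.mp (of_decide_eq_true h1.symm)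

end pStar

theorem pStar_borel_reduction :
    Measurable (fun p : Momega → Bool => pStar p) ∧
    ∀ p q : Momega → Bool,
      (∃ m : Momega, ∀ s : Momega, p s = q (s * m)) ↔
      (∃ m : FreeMonoid Bool, ∀ h : FreeMonoid Bool, pStar p h = pStar q (h * m)) := by
  refine ⟨measurable_pStar, fun p q => ⟨fun ⟨m, hpq⟩ => ⟨m, pStar_mul_of_shift m hpq⟩, ?_⟩⟩
  rintro ⟨m, hpq⟩
  have hm := mem_Momega_of_pStar_mul hpq
  refine ⟨⟨m, hm⟩, fun s => ?_⟩
  have hs := hpq s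
  rwa [pStar_of_mem s.2, pStar_of_mem (Momega.mul_mem s.2 hm)] at hs
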